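/- arXiv:math/9803028 — 3 statements merged into one kernel-verified Lean document; each statement's English description precedes it below -/
import Mathlib

section
/- Let V and W be finite-dimensional complex vector spaces and let U be a linear subspace of V ⊗ W of dimension at least 2 such that every element of U is a pure (simple) tensor, i.e. of the form v ⊗ w. Then either all nonzero elements of U have the form v₀ ⊗ w for a single fixed vector v₀ ∈ V, or all nonzero elements of U have the form v ⊗ w₀ for a single fixed vector w₀ ∈ W. (Equivalently: every projective line contained in the Segre variety lies in a fiber of one of the two projections.) -/
open TensorProduct

/-- Given a linearly independent pair `v₁, v₂`, there are dual functionals `f₁, f₂`. -/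
lemma exists_dual_pair {V : Type*} [AddCommGroup V] [Module ℂ V]
    {v₁ v₂ : V} (h : LinearIndependent ℂ ![v₁, v₂]) :
    ∃ f₁ f₂ : V →ₗ[ℂ] ℂ, f₁ v₁ = 1 ∧ f₁ v₂ = 0 ∧ f₂ v₁ = 0 ∧ f₂ v₂ = 1 := by
  let b := Module.Basis.span h
  obtain ⟨g₁, hg₁⟩ := (b.coord 0).exists_extend
  obtain ⟨g₂, hg₂⟩ := (b.coord 1).exists_extend
  have e : ∀ (g : V →ₗ[ℂ] ℂ) (i j : Fin 2),
      g.comp (Submodule.span ℂ (Set.range ![v₁, v₂])).subtype = b.coord i →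
      g (![v₁, v₂] j) = if j = i then 1 else 0 := by
    intro g i j hg
    have := LinearMap.congr_fun hg (b j)
    simp only [LinearMap.comp_apply, Submodule.subtype_apply] at this
    rw [Module.Basis.span_apply] at this
    rw [this, Module.Basis.coord_apply, show (⟨![v₁, v₂] j, Submodule.subset_span (Set.mem_range_self j)⟩ : Submodule.span ℂ (Set.range ![v₁, v₂])) = b j from (Module.Basis.span_apply h j).symm, Module.Basis.repr_self]
    simp [Finsupp.single_apply, eq_comm]
  refine ⟨g₁, g₂, ?_, ?_, ?_, ?_⟩
  · simpa using e g₁ 0 0 hg₁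
  · simpa using e g₁ 0 1 hg₁
  · simpa using e g₂ 1 0 hg₂
  · simpa using e g₂ 1 1 hg₂

/-- A tensor of rank two is not a pure tensor. -/
lemma not_pure_of_li {V W : Type*} [AddCommGroup V] [Module ℂ V]
    [AddCommGroup W] [Module ℂ W]
    {v₁ v₂ : V} {w₁ w₂ : W} (hv : LinearIndependent ℂ ![v₁, v₂])
    (hw : LinearIndependent ℂ ![w₁, w₂]) (a : V) (b : W) :
    v₁ ⊗ₜ[ℂ] w₁ + v₂ ⊗ₜ[ℂ] w₂ ≠ a ⊗ₜ[ℂ] b := by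
  intro heq
  obtain ⟨f₁, f₂, h11, h12, h21, h22⟩ := exists_dual_pair hv
  have key : ∀ f : V →ₗ[ℂ] ℂ,
      (f v₁) • w₁ + (f v₂) • w₂ = (f a) • b := by
    intro f
    have := congrArg ((TensorProduct.lid ℂ W).toLinearMap ∘ₗ f.rTensor W) heq
    simpa using this
  have h1 := key f₁
  have h2 := key f₂
  rw [h11, h12, one_smul, zero_smul, add_zero] at h1
  rw [h21, h22, zero_smul, one_smul, zero_add] at h2
  rw [linearIndependent_fin2] at hw
  simp only [Matrix.cons_val_one, Matrix.head_cons, Matrix.cons_val_zero] at hw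
  by_cases hfa : f₂ a = 0
  · exact hw.1 (by rw [h2, hfa, zero_smul])
  · exact hw.2 (f₁ a / f₂ a) (by rw [h1, h2, smul_smul, div_mul_cancel₀ _ hfa])

/-- A dependent pair with nonzero second element consists of proportional vectors. -/
lemma pair_dep {V : Type*} [AddCommGroup V] [Module ℂ V] {x y : V}
    (h : ¬ LinearIndependent ℂ ![x, y]) (hy : y ≠ 0) : ∃ c : ℂ, x = c • y := by
  rw [linearIndependent_fin2] at h
  push_neg at h
  simp only [Matrix.cons_val_one, Matrix.head_cons, Matrix.cons_val_zero] at h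
  obtain ⟨c, hc⟩ := h hy
  exact ⟨c, hc.symm⟩

/-- If a subspace of pure tensors contains two independent pure tensors with the same
first factor, then every nonzero element of it has that first factor. -/
lemma fixed_left {V W : Type*} [AddCommGroup V] [Module ℂ V]
    [AddCommGroup W] [Module ℂ W]
    (U : Submodule ℂ (V ⊗[ℂ] W))
    (hpure : ∀ x ∈ U, ∃ (v : V) (w : W), x = v ⊗ₜ[ℂ] w)
    {v₀ : V} {w₁ w₂ : W}
    (hx : v₀ ⊗ₜ[ℂ] w₁ ∈ U) (hy : v₀ ⊗ₜ[ℂ] w₂ ∈ U)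
    (hxy : LinearIndependent ℂ ![v₀ ⊗ₜ[ℂ] w₁, v₀ ⊗ₜ[ℂ] w₂]) :
    ∀ z ∈ U, z ≠ 0 → ∃ w : W, z = v₀ ⊗ₜ[ℂ] w := by
  have hx0 : v₀ ⊗ₜ[ℂ] w₁ ≠ 0 := by simpa using hxy.ne_zero 0
  have hy0 : v₀ ⊗ₜ[ℂ] w₂ ≠ 0 := by simpa using hxy.ne_zero 1
  have hv₀ : v₀ ≠ 0 := fun h => hx0 (by simp [h])
  have hw : LinearIndependent ℂ ![w₁, w₂] := by
    apply LinearIndependent.of_comp (TensorProduct.mk ℂ V W v₀)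
    convert hxy using 1
    funext i
    fin_cases i <;> rfl
    all_goals rfl
  have hw₁ : w₁ ≠ 0 := fun h => hx0 (by simp [h])
  have hw₂ : w₂ ≠ 0 := fun h => hy0 (by simp [h])
  intro z hz hz0
  obtain ⟨a, b, rfl⟩ := hpure z hz
  have hb : b ≠ 0 := fun h => hz0 (by simp [h])
  by_cases hli : LinearIndependent ℂ ![a, v₀]
  · exfalso
    have c1 : ¬ LinearIndependent ℂ ![b, w₁] := by
      intro hbw
      obtain ⟨p, q, hpq⟩ := hpure _ (U.add_mem hz hx)
      exact not_pure_of_li hli hbw p q hpq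
    have c2 : ¬ LinearIndependent ℂ ![b, w₂] := by
      intro hbw
      obtain ⟨p, q, hpq⟩ := hpure _ (U.add_mem hz hy)
      exact not_pure_of_li hli hbw p q hpq
    obtain ⟨c, hc⟩ := pair_dep c1 hw₁
    obtain ⟨d, hd⟩ := pair_dep c2 hw₂
    have hcne : c ≠ 0 := fun h => hb (by rw [hc, h, zero_smul])
    rw [linearIndependent_fin2] at hw
    simp only [Matrix.cons_val_one, Matrix.head_cons, Matrix.cons_val_zero] at hw
    exact hw.2 (c⁻¹ * d) (by rw [mul_smul, ← hd, hc, inv_smul_smul₀ hcne])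
  · obtain ⟨c, hc⟩ := pair_dep hli hv₀
    exact ⟨c • b, by rw [hc, TensorProduct.smul_tmul]⟩

/-- Every projective line (indeed, every linear subspace of dimension ≥ 2)
contained in the Segre variety lies in a fiber of one of the two projections:
if every element of a subspace `U` of `V ⊗ W` of dimension at least `2` is a pure
tensor, then either all nonzero elements of `U` share the first factor, or they
all share the second factor. -/
theorem segre_contains_no_skew_lines {V W : Type*}
    [AddCommGroup V] [Module ℂ V] [FiniteDimensional ℂ V]
    [AddCommGroup W] [Module ℂ W] [FiniteDimensional ℂ W]
    (U : Submodule ℂ (V ⊗[ℂ] W)) (hdim : 2 ≤ Module.finrank ℂ U)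
    (hpure : ∀ x ∈ U, ∃ (v : V) (w : W), x = v ⊗ₜ[ℂ] w) :
    (∃ v₀ : V, ∀ x ∈ U, x ≠ 0 → ∃ w : W, x = v₀ ⊗ₜ[ℂ] w) ∨
    (∃ w₀ : W, ∀ x ∈ U, x ≠ 0 → ∃ v : V, x = v ⊗ₜ[ℂ] w₀) := by
  obtain ⟨f, hf⟩ := exists_linearIndependent_of_le_finrank hdim
  have hli : LinearIndependent ℂ ![((f 0 : U) : V ⊗[ℂ] W), ((f 1 : U) : V ⊗[ℂ] W)] := by
    have := hf.map' U.subtype U.ker_subtype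
    convert this using 1
    funext i; fin_cases i <;> rfl
    all_goals rfl
  obtain ⟨v₁, w₁, hx'⟩ := hpure _ (f 0).2
  obtain ⟨v₂, w₂, hy'⟩ := hpure _ (f 1).2
  rw [hx', hy'] at hli
  have hx : v₁ ⊗ₜ[ℂ] w₁ ∈ U := hx' ▸ (f 0).2
  have hy : v₂ ⊗ₜ[ℂ] w₂ ∈ U := hy' ▸ (f 1).2
  have hx0 : v₁ ⊗ₜ[ℂ] w₁ ≠ 0 := by simpa using hli.ne_zero 0
  have hy0 : v₂ ⊗ₜ[ℂ] w₂ ≠ 0 := by simpa using hli.ne_zero 1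
  have hv₂ : v₂ ≠ 0 := fun h => hy0 (by simp [h])
  have hw₂ : w₂ ≠ 0 := fun h => hy0 (by simp [h])
  have hvw : ¬ LinearIndependent ℂ ![v₁, v₂] ∨ ¬ LinearIndependent ℂ ![w₁, w₂] := by
    by_contra h
    push_neg at h
    obtain ⟨p, q, hpq⟩ := hpure _ (U.add_mem hx hy)
    exact not_pure_of_li h.1 h.2 p q hpq
  rcases hvw with hnv | hnw
  · -- `v₁ = c • v₂` : left disjunct with `v₀ = v₂`
    obtain ⟨c, hc⟩ := pair_dep hnv hv₂
    have e1 : v₁ ⊗ₜ[ℂ] w₁ = v₂ ⊗ₜ[ℂ] (c • w₁) := by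
      rw [hc, TensorProduct.smul_tmul]
    rw [e1] at hx hli
    exact Or.inl ⟨v₂, fixed_left U hpure hx hy hli⟩
  · -- `w₁ = c • w₂` : right disjunct with `w₀ = w₂`, via `TensorProduct.comm`
    obtain ⟨c, hc⟩ := pair_dep hnw hw₂
    set e := TensorProduct.comm ℂ V W
    set U' : Submodule ℂ (W ⊗[ℂ] V) := U.map (e : V ⊗[ℂ] W →ₗ[ℂ] W ⊗[ℂ] V) with hU'
    have hpure' : ∀ x ∈ U', ∃ (w : W) (v : V), x = w ⊗ₜ[ℂ] v := by
      rintro x hx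
      obtain ⟨z, hz, rfl⟩ := hx
      obtain ⟨v, w, rfl⟩ := hpure z hz
      exact ⟨w, v, by simp [e]⟩
    have hmem : ∀ {v : V} {w : W}, v ⊗ₜ[ℂ] w ∈ U → w ⊗ₜ[ℂ] v ∈ U' := by
      intro v w h
      exact ⟨v ⊗ₜ[ℂ] w, h, by simp [e]⟩
    have hx'' : w₂ ⊗ₜ[ℂ] (c • v₁) ∈ U' := by
      have : w₁ ⊗ₜ[ℂ] v₁ ∈ U' := hmem hx
      rwa [hc, TensorProduct.smul_tmul] at this
    have hy'' : w₂ ⊗ₜ[ℂ] v₂ ∈ U' := hmem hy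
    have hli' : LinearIndependent ℂ ![w₂ ⊗ₜ[ℂ] (c • v₁), w₂ ⊗ₜ[ℂ] v₂] := by
      have h2 := hli.map' (e : V ⊗[ℂ] W →ₗ[ℂ] W ⊗[ℂ] V) e.ker
      convert h2 using 1
      funext i
      fin_cases i
      · show w₂ ⊗ₜ[ℂ] (c • v₁) = e (v₁ ⊗ₜ[ℂ] w₁)
        rw [hc]
        simp only [e, TensorProduct.comm_tmul, TensorProduct.smul_tmul]
      · show w₂ ⊗ₜ[ℂ] v₂ = e (v₂ ⊗ₜ[ℂ] w₂)
        simp [e]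
      all_goals rfl
    have main := fixed_left U' hpure' hx'' hy'' hli'
    refine Or.inr ⟨w₂, fun z hz hz0 => ?_⟩
    obtain ⟨v, hv⟩ := main (e z) ⟨z, hz, rfl⟩ (by simpa using hz0)
    refine ⟨v, ?_⟩
    have := congrArg e.symm hv
    simpa [e] using this
end

section
/- Let U be a linear subspace of the space of m × n complex matrices such that every matrix in U has rank at most 1. If x, y ∈ U are such that x and y have distinct column spaces and distinct row spaces (as lines), then x + y has rank 2; consequently, either all nonzero elements of U have the same column space, or all nonzero elements of U have the same row space. -/
open Matrix LinearMap

set_option linter.unusedSectionVars false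


namespace RankOneAux

variable {m n : Type*} [Fintype m] [Fintype n] [DecidableEq m] [DecidableEq n]

lemma vecMulVec_mulVec' (a : m → ℂ) (b : n → ℂ) (v : n → ℂ) :
    (vecMulVec a b) *ᵥ v = (b ⬝ᵥ v) • a := by
  ext i
  simp [mulVec, dotProduct, vecMulVec_apply, Finset.sum_mul, Finset.mul_sum,
    mul_comm, mul_assoc, mul_left_comm]

lemma range_vecMulVec (a : m → ℂ) {b : n → ℂ} (hb : b ≠ 0) :
    LinearMap.range (vecMulVec a b).mulVecLin = Submodule.span ℂ {a} := by
  apply le_antisymm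
  · rintro _ ⟨v, rfl⟩
    rw [mulVecLin_apply, vecMulVec_mulVec']
    exact Submodule.smul_mem _ _ (Submodule.mem_span_singleton_self a)
  · rw [Submodule.span_singleton_le_iff_mem]
    obtain ⟨j, hj⟩ : ∃ j, b j ≠ 0 := by
      by_contra h; push_neg at h; exact hb (funext h)
    refine ⟨(b j)⁻¹ • (Pi.single j 1 : n → ℂ), ?_⟩
    rw [_root_.map_smul, mulVecLin_apply, vecMulVec_mulVec', dotProduct_single, mul_one,
      smul_smul, inv_mul_cancel₀ hj, one_smul]

lemma transpose_vecMulVec (a : m → ℂ) (b : n → ℂ) :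
    (vecMulVec a b)ᵀ = vecMulVec b a := by
  ext i j; simp [vecMulVec_apply, transpose_apply, mul_comm]

lemma eq_zero_of_rank_eq_zero {x : Matrix m n ℂ} (h : x.rank = 0) : x = 0 := by
  rw [Matrix.rank, Submodule.finrank_eq_zero] at h
  ext i j
  have hmem : x *ᵥ Pi.single j 1 ∈ LinearMap.range x.mulVecLin := ⟨Pi.single j 1, rfl⟩
  rw [h, Submodule.mem_bot] at hmem
  have := congrFun hmem i
  simpa using this

lemma decomp {x : Matrix m n ℂ} (hx : x.rank = 1) :
    ∃ a b, a ≠ 0 ∧ b ≠ 0 ∧ x = vecMulVec a b := by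
  have hx1 := hx
  rw [Matrix.rank, finrank_eq_one_iff'] at hx
  obtain ⟨v, hv0, hv⟩ := hx
  set a : m → ℂ := (v : m → ℂ) with ha_def
  have ha : a ≠ 0 := fun h => hv0 (Subtype.ext h)
  have hcol : ∀ j, ∃ c : ℂ, c • a = fun i => x i j := by
    intro j
    obtain ⟨c, hc⟩ := hv ⟨x *ᵥ Pi.single j 1, ⟨Pi.single j 1, rfl⟩⟩
    refine ⟨c, ?_⟩
    have := congrArg Subtype.val hc
    simp only [Submodule.coe_smul] at this
    rw [this]
    ext i; simp [mulVec_single]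
  choose b hb using hcol
  refine ⟨a, b, ha, ?_, ?_⟩
  · intro h
    have hx0 : x = 0 := by
      ext i j
      have := congrFun (hb j) i
      rw [h] at this
      simpa using this.symm
    rw [hx0, Matrix.rank_zero] at hx1
    exact absurd hx1 (by norm_num)
  · ext i j
    have := congrFun (hb j) i
    simp only [Pi.smul_apply, smul_eq_mul] at this
    rw [vecMulVec_apply, mul_comm, this]

lemma exists_dual {b d : n → ℂ} (hd : d ≠ 0) (hbd : ∀ t : ℂ, b ≠ t • d) :
    ∃ v, b ⬝ᵥ v = 1 ∧ d ⬝ᵥ v = 0 := by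
  obtain ⟨j0, hj0⟩ : ∃ j, d j ≠ 0 := by
    by_contra h; push_neg at h; exact hd (funext h)
  have hclaim : ∃ v, d ⬝ᵥ v = 0 ∧ b ⬝ᵥ v ≠ 0 := by
    by_contra hcon
    push_neg at hcon
    apply hbd (b j0 / d j0)
    funext j
    have hv : d ⬝ᵥ (d j0 • (Pi.single j 1 : n → ℂ) - d j • (Pi.single j0 1 : n → ℂ)) = 0 := by
      simp [dotProduct_sub, dotProduct_smul, dotProduct_single]
      ring
    have hb := hcon _ hv
    simp only [dotProduct_sub, dotProduct_smul, dotProduct_single, smul_eq_mul, mul_one] at hb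
    have : d j0 * b j - d j * b j0 = 0 := by linear_combination hb
    simp only [Pi.smul_apply, smul_eq_mul]
    field_simp
    linear_combination this
  obtain ⟨v, h0, h1⟩ := hclaim
  refine ⟨(b ⬝ᵥ v)⁻¹ • v, ?_, ?_⟩
  · rw [dotProduct_smul, smul_eq_mul, inv_mul_cancel₀ h1]
  · rw [dotProduct_smul, h0, smul_zero]

lemma indep_of_span_ne {a c : m → ℂ} (ha : a ≠ 0) (hc : c ≠ 0)
    (h : Submodule.span ℂ {a} ≠ Submodule.span ℂ {c}) : LinearIndependent ℂ ![a, c] := by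
  rw [linearIndependent_fin2]
  refine ⟨hc, fun t ht => ?_⟩
  simp only [Matrix.cons_val_one, Matrix.head_cons, Matrix.cons_val_zero] at ht
  apply h
  rw [← ht]
  exact Submodule.span_singleton_smul_eq
    (isUnit_iff_ne_zero.2 (fun h0 => ha (by rw [← ht, h0, zero_smul]))) c

end RankOneAux

namespace RankOneAux

lemma key {m n : Type*} [Fintype m] [Fintype n] [DecidableEq m] [DecidableEq n]
    (x y : Matrix m n ℂ) (hx : x.rank = 1) (hy : y.rank = 1)
    (hcol : LinearMap.range x.mulVecLin ≠ LinearMap.range y.mulVecLin)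
    (hrow : LinearMap.range x.transpose.mulVecLin ≠ LinearMap.range y.transpose.mulVecLin) :
    (x + y).rank = 2 := by
  obtain ⟨a, b, ha, hb, rfl⟩ := decomp hx
  obtain ⟨c, d, hc, hd, rfl⟩ := decomp hy
  rw [range_vecMulVec a hb, range_vecMulVec c hd] at hcol
  rw [transpose_vecMulVec, transpose_vecMulVec, range_vecMulVec b ha,
    range_vecMulVec d hc] at hrow
  have hac : LinearIndependent ℂ ![a, c] := indep_of_span_ne ha hc hcol
  have hbd : LinearIndependent ℂ ![b, d] := indep_of_span_ne hb hd hrow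
  rw [linearIndependent_fin2] at hbd
  simp only [Matrix.cons_val_one, Matrix.head_cons, Matrix.cons_val_zero] at hbd
  obtain ⟨hd0, hbd'⟩ := hbd
  have hbd1 : ∀ t : ℂ, b ≠ t • d := by
    intro t h
    exact hbd' t h.symm
  have hdb1 : ∀ t : ℂ, d ≠ t • b := by
    intro t h
    rcases eq_or_ne t 0 with rfl | ht
    · exact hd0 (by simpa using h)
    · exact hbd1 t⁻¹ (by rw [h, smul_smul, inv_mul_cancel₀ ht, one_smul])
  have hbnz : b ≠ 0 := hb
  obtain ⟨v₁, hv₁b, hv₁d⟩ := exists_dual hd0 hbd1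
  obtain ⟨v₂, hv₂d, hv₂b⟩ := exists_dual hbnz hdb1
  have hr : LinearMap.range ((vecMulVec a b + vecMulVec c d).mulVecLin)
      = Submodule.span ℂ (Set.range ![a, c]) := by
    apply le_antisymm
    · rintro _ ⟨v, rfl⟩
      rw [mulVecLin_apply, add_mulVec, vecMulVec_mulVec', vecMulVec_mulVec']
      refine Submodule.add_mem _ (Submodule.smul_mem _ _ ?_) (Submodule.smul_mem _ _ ?_)
      · exact Submodule.subset_span ⟨0, rfl⟩
      · exact Submodule.subset_span ⟨1, rfl⟩
    · rw [Submodule.span_le]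
      rintro _ ⟨i, rfl⟩
      fin_cases i
      · refine ⟨v₁, ?_⟩
        rw [mulVecLin_apply, add_mulVec, vecMulVec_mulVec', vecMulVec_mulVec',
          hv₁b, hv₁d]
        simp
      · refine ⟨v₂, ?_⟩
        rw [mulVecLin_apply, add_mulVec, vecMulVec_mulVec', vecMulVec_mulVec',
          hv₂b, hv₂d]
        simp
  rw [Matrix.rank, hr, finrank_span_eq_card hac]
  simp

end RankOneAux

/-- For a linear space `U` of `m × n` complex matrices of rank at most one:
(a) if `x, y` are rank-one matrices with distinct column spaces and distinct row
spaces, then `x + y` has rank `2`; (b) consequently, either all nonzero elements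
of `U` have the same column space, or all nonzero elements of `U` have the same
row space.  Here the column space of `x` is the range of `x.mulVecLin : ℂⁿ → ℂᵐ`,
and the row space of `x` is the column space of `xᵀ`. -/
theorem rank_le_one_subspace_dichotomy {m n : Type*}
    [Fintype m] [Fintype n] [DecidableEq m] [DecidableEq n]
    (U : Submodule ℂ (Matrix m n ℂ)) (hU : ∀ x ∈ U, x.rank ≤ 1) :
    (∀ x y : Matrix m n ℂ, x.rank = 1 → y.rank = 1 →
        LinearMap.range x.mulVecLin ≠ LinearMap.range y.mulVecLin →
        LinearMap.range x.transpose.mulVecLin ≠ LinearMap.range y.transpose.mulVecLin →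
        (x + y).rank = 2) ∧
    ((∀ x ∈ U, x ≠ 0 → ∀ y ∈ U, y ≠ 0 →
        LinearMap.range x.mulVecLin = LinearMap.range y.mulVecLin) ∨
     (∀ x ∈ U, x ≠ 0 → ∀ y ∈ U, y ≠ 0 →
        LinearMap.range x.transpose.mulVecLin = LinearMap.range y.transpose.mulVecLin)) := by
  refine ⟨fun x y hx hy => RankOneAux.key x y hx hy, ?_⟩
  -- every nonzero element of U has rank 1
  have hrank : ∀ x ∈ U, x ≠ 0 → x.rank = 1 := by
    intro x hxU hx0
    have h1 := hU x hxU
    have h0 : x.rank ≠ 0 := fun h => hx0 (RankOneAux.eq_zero_of_rank_eq_zero h)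
    omega
  -- pair lemma
  have hpair : ∀ x ∈ U, x ≠ 0 → ∀ y ∈ U, y ≠ 0 →
      LinearMap.range x.mulVecLin = LinearMap.range y.mulVecLin ∨
      LinearMap.range x.transpose.mulVecLin = LinearMap.range y.transpose.mulVecLin := by
    intro x hxU hx0 y hyU hy0
    by_contra h
    push_neg at h
    have h2 := RankOneAux.key x y (hrank x hxU hx0) (hrank y hyU hy0) h.1 h.2
    have := hU (x + y) (U.add_mem hxU hyU)
    omega
  by_cases hcol : ∀ x ∈ U, x ≠ 0 → ∀ y ∈ U, y ≠ 0 →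
      LinearMap.range x.mulVecLin = LinearMap.range y.mulVecLin
  · exact Or.inl hcol
  · right
    push_neg at hcol
    obtain ⟨p, hpU, hp0, q, hqU, hq0, hpq⟩ := hcol
    have hrowpq : LinearMap.range p.transpose.mulVecLin = LinearMap.range q.transpose.mulVecLin :=
      (hpair p hpU hp0 q hqU hq0).resolve_left hpq
    have hkey : ∀ x ∈ U, x ≠ 0 →
        LinearMap.range x.transpose.mulVecLin = LinearMap.range p.transpose.mulVecLin := by
      intro x hxU hx0
      by_cases hxp : LinearMap.range x.mulVecLin = LinearMap.range p.mulVecLin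
      · have hxq : LinearMap.range x.mulVecLin ≠ LinearMap.range q.mulVecLin := by
          rw [hxp]; exact hpq
        rw [(hpair x hxU hx0 q hqU hq0).resolve_left hxq, hrowpq]
      · exact (hpair x hxU hx0 p hpU hp0).resolve_left hxp
    intro x hxU hx0 y hyU hy0
    rw [hkey x hxU hx0, hkey y hyU hy0]
end

section
/- Let 1 → Z → G → Γ → 1 be a central extension of a group Γ by Z ≅ ℤ whose extension class in H²(Γ, ℚ) is nonzero. If H¹(Γ, ℚ) = 0 and H²(Γ, ℚ) is one-dimensional over ℚ, then H²(G, ℚ) = 0. -/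
noncomputable def zprim (h : ℤ → ℚ) : ℤ → ℚ := fun m =>
  if 0 ≤ m then ∑ i ∈ Finset.range m.toNat, h i
  else -∑ i ∈ Finset.range (-m).toNat, h (m + i)

lemma zprim_zero (h : ℤ → ℚ) : zprim h 0 = 0 := by simp [zprim]

lemma zprim_succ (h : ℤ → ℚ) (m : ℤ) : zprim h (m + 1) = zprim h m + h m := by
  rcases le_or_gt 0 m with hm | hm
  · have hm1 : 0 ≤ m + 1 := by omega
    have ht : (m + 1).toNat = m.toNat + 1 := by omega
    simp only [zprim, if_pos hm, if_pos hm1, ht, Finset.sum_range_succ,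
      Int.toNat_of_nonneg hm]
  · rcases eq_or_lt_of_le (by omega : m + 1 ≤ 0) with h0 | h0
    · have : m = -1 := by omega
      subst this
      simp [zprim]
    · have hm1 : ¬ 0 ≤ m + 1 := by omega
      have hmneg : ¬ 0 ≤ m := by omega
      have ht : (-m).toNat = (-(m+1)).toNat + 1 := by omega
      simp only [zprim, if_neg hm1, if_neg hmneg, ht, Finset.sum_range_succ']
      have hcg : ∀ i ∈ Finset.range (-(m+1)).toNat, h (m + (↑(i + 1) : ℤ)) = h (m + 1 + ↑i) := by
        intro i _
        congr 1
        push_cast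
        ring
      rw [Finset.sum_congr rfl hcg]
      push_cast
      ring_nf


/- Group cohomology with trivial `ℚ`-coefficients, described by cocycles:
a `1`-cocycle on `Γ` is `f : Γ → ℚ` with `f (ab) = f a + f b`; `H¹(Γ,ℚ) = 0` says
every such `f` vanishes.  A `2`-cocycle is `d : Γ → Γ → ℚ` with
`d β γ - d (αβ) γ + d α (βγ) - d α β = 0`, and it is a coboundary if
`d α β = b β - b (αβ) + b α` for some `b : Γ → ℚ`.

A central extension `1 → ℤ → G → Γ → 1` is encoded by a central element `z` of
infinite order generating `ker π`, a set-theoretic section `s` of `π`, and the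
resulting `ℤ`-valued `2`-cocycle `c` (`s α * s β = z ^ (c α β) * s (αβ)`); its
extension class in `H²(Γ, ℚ)` is nonzero iff `c` is not a rational coboundary.
`H²(Γ, ℚ)` being one-dimensional (spanned by the nonzero class of `c`) says that
every `2`-cocycle is a rational multiple of `c` plus a coboundary.

Theorem: under these hypotheses together with `H¹(Γ, ℚ) = 0`, we have
`H²(G, ℚ) = 0`, i.e. every `2`-cocycle on `G` is a coboundary. -/
theorem H2_of_central_extension_vanishes
    {G Γ : Type*} [Group G] [Group Γ]
    (π : G →* Γ) (hπ : Function.Surjective π) (z : G)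
    (hker : π.ker = Subgroup.zpowers z)
    (hz : ∀ n : ℤ, z ^ n = 1 → n = 0)
    (hcent : ∀ g : G, g * z = z * g)
    (s : Γ → G) (hs : ∀ γ : Γ, π (s γ) = γ)
    (c : Γ → Γ → ℤ) (hc : ∀ α β : Γ, s α * s β = z ^ (c α β) * s (α * β))
    (hclass : ¬ ∃ b : Γ → ℚ, ∀ α β : Γ, (c α β : ℚ) = b β - b (α * β) + b α)
    (hH1 : ∀ f : Γ → ℚ, (∀ a b : Γ, f (a * b) = f a + f b) → ∀ a : Γ, f a = 0)
    (hH2 : ∀ d : Γ → Γ → ℚ,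
      (∀ α β γ : Γ, d β γ - d (α * β) γ + d α (β * γ) - d α β = 0) →
      ∃ (q : ℚ) (b : Γ → ℚ), ∀ α β : Γ,
        d α β = q * (c α β : ℚ) + (b β - b (α * β) + b α)) :
    ∀ e : G → G → ℚ,
      (∀ x y w : G, e y w - e (x * y) w + e x (y * w) - e x y = 0) →
      ∃ b : G → ℚ, ∀ x y : G, e x y = b y - b (x * y) + b x := by
  -- injectivity of k ↦ z ^ k
  have zinj : ∀ a b : ℤ, z ^ a = z ^ b → a = b := by
    intro a b h
    have h1 : z ^ (a - b) = 1 := by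
      simp [zpow_sub, h]
    have := hz _ h1
    omega
  -- z powers are central
  have hcomm : ∀ (k : ℤ) (g : G), g * z ^ k = z ^ k * g := by
    intro k g
    exact ((show Commute g z from hcent g).zpow_right k).eq
  -- z powers are in the kernel
  have hπz : ∀ k : ℤ, π (z ^ k) = 1 := by
    intro k
    have : z ^ k ∈ π.ker := by
      rw [hker]
      exact Subgroup.zpow_mem _ (Subgroup.mem_zpowers z) k
    exact this
  -- decomposition g = z ^ n g * s (π g)
  have hex : ∀ g : G, ∃ k : ℤ, g = z ^ k * s (π g) := by
    intro g
    have hmem : g * (s (π g))⁻¹ ∈ π.ker := by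
      have : π (g * (s (π g))⁻¹) = 1 := by
        rw [map_mul, map_inv, hs, mul_inv_cancel]
      exact this
    rw [hker] at hmem
    obtain ⟨k, hk⟩ := Subgroup.mem_zpowers_iff.mp hmem
    exact ⟨k, by rw [hk, inv_mul_cancel_right]⟩
  choose n hn using hex
  -- n (z ^ j * g) = j + n g
  have hnz : ∀ (j : ℤ) (g : G), n (z ^ j * g) = j + n g := by
    intro j g
    have h1 : π (z ^ j * g) = π g := by rw [map_mul, hπz, one_mul]
    have h2 : z ^ (n (z ^ j * g)) * s (π g) = z ^ (j + n g) * s (π g) := by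
      conv_lhs => rw [← h1, ← hn (z ^ j * g)]
      calc z ^ j * g = z ^ j * (z ^ n g * s (π g)) := by rw [← hn g]
        _ = z ^ (j + n g) * s (π g) := by rw [zpow_add, mul_assoc]
    exact zinj _ _ (mul_right_cancel h2)
  -- n is multiplicative up to c
  have hnmul : ∀ x y : G, n (x * y) = n x + n y + c (π x) (π y) := by
    intro x y
    have hπxy : π (x * y) = π x * π y := map_mul π x y
    have h2 : z ^ (n (x * y)) * s (π x * π y) = z ^ (n x + n y + c (π x) (π y)) * s (π x * π y) := by
      conv_lhs => rw [← hπxy, ← hn (x * y)]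
      calc x * y = (z ^ n x * s (π x)) * (z ^ n y * s (π y)) := by rw [← hn x, ← hn y]
        _ = z ^ n x * (z ^ n y * s (π x)) * s (π y) := by
            rw [mul_assoc, mul_assoc, ← mul_assoc (s (π x)), hcomm, mul_assoc]
        _ = z ^ (n x + n y) * (s (π x) * s (π y)) := by
            rw [zpow_add]; simp only [mul_assoc]
        _ = z ^ (n x + n y) * (z ^ (c (π x) (π y)) * s (π x * π y)) := by rw [hc]
        _ = z ^ (n x + n y + c (π x) (π y)) * s (π x * π y) := by
            rw [zpow_add z (n x + n y), mul_assoc]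
    exact zinj _ _ (mul_right_cancel h2)
  -- s 1 is a power of z
  obtain ⟨k0, hk0⟩ : ∃ k0 : ℤ, z ^ k0 = s 1 := by
    have hmem : s (1 : Γ) ∈ π.ker := by
      have : π (s (1 : Γ)) = 1 := hs 1
      exact this
    rw [hker] at hmem
    exact Subgroup.mem_zpowers_iff.mp hmem
  have hnzpow : ∀ j : ℤ, n (z ^ j) = j - k0 := by
    intro j
    have h1 : π (z ^ j) = 1 := hπz j
    have h2 : z ^ (n (z ^ j)) * s (π (z ^ j)) = z ^ (j - k0) * s (π (z ^ j)) := by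
      rw [← hn (z ^ j), h1, ← hk0, ← zpow_add]
      congr 1
      omega
    exact zinj _ _ (mul_right_cancel h2)
  have hn1 : n (1 : G) = -k0 := by
    have := hnzpow 0
    rw [zpow_zero] at this
    omega
  -- additive maps vanishing on z vanish identically
  have homzero : ∀ L : G → ℚ, (∀ x y, L (x * y) = L x + L y) → L z = 0 → ∀ g, L g = 0 := by
    intro L hL hLz
    have h1 : L 1 = 0 := by have := hL 1 1; simp at this; linarith
    have hinv : ∀ g : G, L g⁻¹ = -L g := by
      intro g
      have := hL g g⁻¹
      rw [mul_inv_cancel, h1] at this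
      linarith
    have hpow : ∀ k : ℤ, L (z ^ k) = 0 := by
      intro k
      induction k using Int.induction_on with
      | zero => rw [zpow_zero]; exact h1
      | succ k ih => rw [zpow_add_one, hL, ih, hLz]; ring
      | pred k ih => rw [zpow_sub_one, hL, ih, hinv, hLz]; ring
    have hf : ∀ a b : Γ, L (s (a * b)) = L (s a) + L (s b) := by
      intro a b
      have h2 : L (s a * s b) = L (z ^ c a b) + L (s (a * b)) := by rw [hc a b, hL]
      rw [hpow] at h2
      rw [hL] at h2
      linarith
    have hf0 := hH1 (fun γ => L (s γ)) hf
    intro g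
    calc L g = L (z ^ n g * s (π g)) := by rw [← hn g]
      _ = L (z ^ n g) + L (s (π g)) := hL _ _
      _ = 0 := by rw [hpow]; have := hf0 (π g); rw [this]; ring
  -- symmetry of any cocycle against central powers of z
  have sym : ∀ E : G → G → ℚ,
      (∀ x y w, E y w - E (x * y) w + E x (y * w) - E x y = 0) →
      ∀ (m : ℤ) (g : G), E g (z ^ m) = E (z ^ m) g := by
    intro E hE
    have key : ∀ w : G, (∀ g : G, g * w = w * g) →
        ∀ x y : G, (E (x * y) w - E w (x * y)) = (E x w - E w x) + (E y w - E w y) := by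
      intro w hw x y
      have h1 := hE x y w
      have h2 := hE w x y
      have h3 := hE x w y
      rw [hw x, ← hw y] at h3
      linarith
    have L1 : ∀ g, E g z - E z g = 0 := by
      apply homzero _ (by
        intro x y
        have := key z hcent x y
        linarith)
      ring
    intro m g
    have L2 : ∀ g, E g (z ^ m) - E (z ^ m) g = 0 := by
      apply homzero _ (by
        intro x y
        have := key (z ^ m) (hcomm m) x y
        linarith)
      have := L1 (z ^ m)
      linarith
    linarith [L2 g]
  -- subtracting a coboundary preserves cocycles
  have cob : ∀ (E : G → G → ℚ) (b : G → ℚ),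
      (∀ x y w, E y w - E (x * y) w + E x (y * w) - E x y = 0) →
      ∀ x y w : G,
        (E y w - (b w - b (y * w) + b y)) - (E (x * y) w - (b w - b (x * y * w) + b (x * y)))
        + (E x (y * w) - (b (y * w) - b (x * (y * w)) + b x)) - (E x y - (b y - b (x * y) + b x)) = 0 := by
    intro E b hE x y w
    have h := hE x y w
    have ha : x * (y * w) = x * y * w := (mul_assoc _ _ _).symm
    rw [ha]
    linarith
  -- normalization facts
  have hnorm : ∀ E : G → G → ℚ,
      (∀ x y w, E y w - E (x * y) w + E x (y * w) - E x y = 0) →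
      E 1 1 = 0 → (∀ x, E x 1 = 0) ∧ (∀ y, E 1 y = 0) := by
    intro E hE h11
    constructor
    · intro x
      have := hE x 1 1
      simp only [mul_one, one_mul] at this
      linarith
    · intro y
      have := hE 1 1 y
      simp only [mul_one, one_mul] at this
      linarith
  intro e he
  -- Stage 1: normalize so that the cocycle vanishes at (1,1)
  set e1 : G → G → ℚ := fun x y => e x y - e 1 1 with he1def
  have he1 : ∀ x y w : G, e1 y w - e1 (x * y) w + e1 x (y * w) - e1 x y = 0 := by
    intro x y w
    simp only [he1def]
    have := he x y w
    linarith
  have h11 : e1 1 1 = 0 := by simp [he1def]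
  obtain ⟨hr1, hc1⟩ := hnorm e1 he1 h11
  -- Stage 2: kill the cocycle on the center
  set A : ℤ → ℚ := zprim (fun m => -(e1 (z ^ m) z)) with hA
  have hA0 : A 0 = 0 := zprim_zero _
  have hAstep : ∀ m : ℤ, A (m + 1) = A m - e1 (z ^ m) z := by
    intro m
    rw [hA]
    have h := zprim_succ (fun m => -(e1 (z ^ m) z)) m
    rw [h]
    ring
  have hrA : ∀ m k : ℤ, e1 (z ^ m) (z ^ k) = A m + A k - A (m + k) := by
    intro m k
    induction k using Int.induction_on with
    | zero =>
      rw [zpow_zero, hr1, hA0, add_zero m]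
      ring
    | succ i ih =>
      have hid := he1 (z ^ m) (z ^ (i : ℤ)) z
      rw [← zpow_add, ← zpow_add_one] at hid
      have s1 := hAstep (i : ℤ)
      have s2 := hAstep (m + (i : ℤ))
      rw [show m + ((i : ℤ) + 1) = m + (i : ℤ) + 1 by ring]
      linarith
    | pred i ih =>
      have hid := he1 (z ^ m) (z ^ (-(i : ℤ) - 1)) z
      rw [← zpow_add] at hid
      rw [show z ^ (-(i : ℤ) - 1) * z = z ^ (-(i : ℤ)) from by
        rw [← zpow_add_one]; congr 1; ring] at hid
      have s1 := hAstep (-(i : ℤ) - 1)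
      rw [show -(i : ℤ) - 1 + 1 = -(i : ℤ) by ring] at s1
      have s2 := hAstep (m + (-(i : ℤ) - 1))
      rw [show m + (-(i : ℤ) - 1) + 1 = m + -(i : ℤ) by ring] at s2
      linarith
  set b2 : G → ℚ := fun g => A (n g + k0) with hb2
  set e2 : G → G → ℚ := fun x y => e1 x y - (b2 y - b2 (x * y) + b2 x) with he2def
  have he2 : ∀ x y w : G, e2 y w - e2 (x * y) w + e2 x (y * w) - e2 x y = 0 := by
    intro x y w
    simp only [he2def]
    exact cob e1 b2 he1 x y w
  have hb2pow : ∀ j : ℤ, b2 (z ^ j) = A j := by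
    intro j
    simp only [hb2]
    rw [hnzpow]
    congr 1
    ring
  have h211 : e2 1 1 = 0 := by
    have hb21 : b2 (1 : G) = 0 := by
      simp only [hb2]
      rw [hn1]
      rw [show -k0 + k0 = 0 by ring]
      exact hA0
    simp only [he2def, one_mul]
    rw [h11, hb21]
    ring
  obtain ⟨hr2, hc2⟩ := hnorm e2 he2 h211
  have hcen2 : ∀ m k : ℤ, e2 (z ^ m) (z ^ k) = 0 := by
    intro m k
    have hmk : b2 (z ^ m * z ^ k) = A (m + k) := by
      rw [← zpow_add]
      exact hb2pow (m + k)
    simp only [he2def]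
    rw [hrA m k, hb2pow, hb2pow, hmk]
    ring
  -- Stage 3: kill the cocycle on the whole z-fiber
  set b3 : G → ℚ := fun g => -(e2 (z ^ n g) (s (π g))) with hb3
  set e3 : G → G → ℚ := fun x y => e2 x y - (b3 y - b3 (x * y) + b3 x) with he3def
  have he3 : ∀ x y w : G, e3 y w - e3 (x * y) w + e3 x (y * w) - e3 x y = 0 := by
    intro x y w
    simp only [he3def]
    exact cob e2 b3 he2 x y w
  have hμ : ∀ (i j : ℤ) (γ : Γ),
      e2 (z ^ i) (z ^ j * s γ) = e2 (z ^ (i + j)) (s γ) - e2 (z ^ j) (s γ) := by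
    intro i j γ
    have hid := he2 (z ^ i) (z ^ j) (s γ)
    rw [← zpow_add] at hid
    have := hcen2 i j
    linarith
  have hb3z : ∀ j : ℤ, b3 (z ^ j) = 0 := by
    intro j
    simp only [hb3]
    rw [hnzpow j, hπz j, ← hk0, hcen2]
    ring
  have hleft3 : ∀ (j : ℤ) (w : G), e3 (z ^ j) w = 0 := by
    intro j w
    have hπw : π (z ^ j * w) = π w := by rw [map_mul, hπz, one_mul]
    have hnw : n (z ^ j * w) = j + n w := hnz j w
    have h1 : e2 (z ^ j) w = e2 (z ^ (j + n w)) (s (π w)) - e2 (z ^ n w) (s (π w)) := by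
      conv_lhs => rw [hn w]
      exact hμ j (n w) (π w)
    have h2 : b3 w = -(e2 (z ^ n w) (s (π w))) := by simp only [hb3]
    have h3 : b3 (z ^ j * w) = -(e2 (z ^ (j + n w)) (s (π w))) := by
      simp only [hb3]
      rw [hnw, hπw]
    simp only [he3def]
    rw [h1, h2, h3, hb3z]
    ring
  have hright3 : ∀ (j : ℤ) (w : G), e3 w (z ^ j) = 0 := by
    intro j w
    rw [sym e3 he3 j w]
    exact hleft3 j w
  -- Stage 4: e3 is invariant under multiplication by powers of z
  have hL : ∀ (j : ℤ) (u v : G), e3 (z ^ j * u) v = e3 u v := by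
    intro j u v
    have hid := he3 (z ^ j) u v
    have h1 := hleft3 j (u * v)
    have h2 := hleft3 j u
    linarith
  have hR : ∀ (j : ℤ) (u v : G), e3 u (z ^ j * v) = e3 u v := by
    intro j u v
    have hid := he3 u (z ^ j) v
    rw [hcomm j u] at hid
    rw [hL j u v] at hid
    have h1 := hleft3 j v
    have h2 := hright3 j u
    linarith
  have hinfl : ∀ x y : G, e3 x y = e3 (s (π x)) (s (π y)) := by
    intro x y
    conv_lhs => rw [hn x, hn y]
    rw [hL, hR]
  -- descend to a cocycle on Γ
  have hd : ∀ α β γ : Γ,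
      (fun α β => e3 (s α) (s β)) β γ - (fun α β => e3 (s α) (s β)) (α * β) γ
      + (fun α β => e3 (s α) (s β)) α (β * γ) - (fun α β => e3 (s α) (s β)) α β = 0 := by
    intro α β γ
    simp only
    have hid := he3 (s α) (s β) (s γ)
    rw [hc α β, hc β γ, hL, hR] at hid
    linarith
  obtain ⟨q, b, hqb⟩ := hH2 (fun α β => e3 (s α) (s β)) hd
  -- assemble the coboundary
  refine ⟨fun g => e 1 1 + b2 g + b3 g + (-q * (n g : ℚ) + b (π g)), ?_⟩
  intro x y
  have hq : e3 (s (π x)) (s (π y))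
      = q * (c (π x) (π y) : ℚ) + (b (π y) - b (π x * π y) + b (π x)) := hqb (π x) (π y)
  have hcval : (c (π x) (π y) : ℚ) = (n (x * y) : ℚ) - (n x : ℚ) - (n y : ℚ) := by
    have h := hnmul x y
    have h' : c (π x) (π y) = n (x * y) - n x - n y := by omega
    rw [h']
    push_cast
    ring
  have h3 : e3 x y = (-q * (n y : ℚ) + b (π y)) - (-q * (n (x * y) : ℚ) + b (π (x * y)))
      + (-q * (n x : ℚ) + b (π x)) := by
    rw [hinfl x y, hq, hcval, map_mul]
    ring
  simp only [he3def, he2def, he1def] at h3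
  simp only
  linarith
end
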